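/- arXiv:2510.22416 — 2 statements merged into one kernel-verified Lean document; each statement's English description precedes it below -/
import Mathlib

section
/- Let λ ∈ ℝ and let K : (0,∞) → ℝ be continuous and locally square-integrable. Suppose that for all 0 < t < T one has ∫₀ᵀ e^{−λ(T−s)} K(s)² ds = e^{−2λ(T−t)} ∫₀ᵗ e^{−λ(t−s)} K(s)² ds + ∫₀^{T−t} e^{−λ(T−s)} K(s)² ds. Then there exists c ∈ ℝ such that K(t) = c e^{−λt} for all t > 0. -/
/-!
Writing `H x = ∫₀ˣ e^{λs} K(s)² ds` and `u = T - t`, the identity says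
`H (u + t) - H u = e^{-λu} H t`. Differentiating in `t` gives
`e^{λ(u+t)} K(u+t)² = e^{-λu} e^{λt} K(t)²`, i.e. `ψ = e^{λ·} K` satisfies
`ψ(u+t)² = ψ(t)²`, so `ψ²` is constant on `(0, ∞)`. A continuous function with constant
square on a connected set is constant, hence `K t = ψ 1 · e^{-λt}`.
-/

open MeasureTheory Set Filter intervalIntegral

theorem IsPreconnected.eqOn_of_sq_eq_sq {α 𝕜 : Type*} [TopologicalSpace α] [Field 𝕜]
    [TopologicalSpace 𝕜] [T1Space 𝕜] [ContinuousInv₀ 𝕜] [ContinuousMul 𝕜] {f : α → 𝕜} {S : Set α}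
    (hS : IsPreconnected S) (hf : ContinuousOn f S) {y : α} (hy : y ∈ S)
    (hsq : ∀ x ∈ S, f x ^ 2 = f y ^ 2) : ∀ x ∈ S, f x = f y := by
  by_cases hy0 : f y = 0
  · intro x hx
    simpa [hy0] using hsq x hx
  · exact hS.eq_of_sq_eq hf continuousOn_const hsq (fun _ => hy0) hy rfl

theorem integral_exp_neg_mul_sub_mul (lam A b : ℝ) (f : ℝ → ℝ) :
    ∫ s in (0:ℝ)..b, Real.exp (-lam * (A - s)) * f s
      = Real.exp (-lam * A) * ∫ s in (0:ℝ)..b, Real.exp (lam * s) * f s := by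
  rw [← intervalIntegral.integral_const_mul]
  refine integral_congr fun s _ => ?_
  simp only [← mul_assoc, ← Real.exp_add]
  ring_nf

theorem integral_exp_mul_add_sub {lam : ℝ} {f : ℝ → ℝ}
    (hfun : ∀ t T : ℝ, 0 < t → t < T →
      (∫ s in (0:ℝ)..T, Real.exp (-lam * (T - s)) * f s)
        = Real.exp (-2 * lam * (T - t)) *
            (∫ s in (0:ℝ)..t, Real.exp (-lam * (t - s)) * f s)
          + ∫ s in (0:ℝ)..(T - t), Real.exp (-lam * (T - s)) * f s)
    {u t : ℝ} (hu : 0 < u) (ht : 0 < t) :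
    (∫ s in (0:ℝ)..(u + t), Real.exp (lam * s) * f s)
        - ∫ s in (0:ℝ)..u, Real.exp (lam * s) * f s
      = Real.exp (-lam * u) * ∫ s in (0:ℝ)..t, Real.exp (lam * s) * f s := by
  have h := hfun t (u + t) ht (by linarith)
  simp only [integral_exp_neg_mul_sub_mul, add_sub_cancel_right] at h
  have hexp : Real.exp (-2 * lam * u) * Real.exp (-lam * t)
      = Real.exp (-lam * (u + t)) * Real.exp (-lam * u) := by
    rw [← Real.exp_add, ← Real.exp_add]; ring_nf
  refine mul_left_cancel₀ (Real.exp_ne_zero (-lam * (u + t))) ?_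
  linear_combination h + (∫ s in (0:ℝ)..t, Real.exp (lam * s) * f s) * hexp

theorem hasDerivAt_integral_of_continuousOn_Ioi {g : ℝ → ℝ} (hgc : ContinuousOn g (Ioi 0))
    (hgi : ∀ T > 0, IntervalIntegrable g volume 0 T) {t : ℝ} (ht : 0 < t) :
    HasDerivAt (fun x => ∫ s in (0:ℝ)..x, g s) (g t) t :=
  integral_hasDerivAt_right (hgi t ht) (hgc.stronglyMeasurableAtFilter isOpen_Ioi t ht)
    (hgc.continuousAt (Ioi_mem_nhds ht))

theorem deriv_eq_of_map_add_sub {H g a : ℝ → ℝ} (hH : ∀ t > 0, HasDerivAt H (g t) t)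
    (hadd : ∀ u t, 0 < u → 0 < t → H (u + t) - H u = a u * H t) {u t : ℝ}
    (hu : 0 < u) (ht : 0 < t) : g (u + t) = a u * g t := by
  have hshift : HasDerivAt (fun x => H (u + x) - H u) (g (u + t)) t := by
    simpa using ((hH (u + t) (by positivity)).comp_const_add u t).sub_const (H u)
  have heq : (fun x => H (u + x) - H u) =ᶠ[nhds t] fun x => a u * H x := by
    filter_upwards [Ioi_mem_nhds ht] with x hx using hadd u x hu hx
  exact (hshift.congr_of_eventuallyEq heq.symm).unique ((hH t ht).const_mul (a u))

/-- Deterministic core of the theorem on the driftless Volterra square-root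
process: the second-moment identity forced by the time-homogeneous Markov
property implies that the kernel is exponential. -/
theorem stmt_5 (lam : ℝ) (K : ℝ → ℝ)
    (hKc : ContinuousOn K (Set.Ioi 0))
    (hKL2 : ∀ T > 0, MeasureTheory.IntegrableOn (fun s => (K s) ^ 2) (Set.Ioc 0 T))
    (hfun : ∀ t T : ℝ, 0 < t → t < T →
      (∫ s in (0:ℝ)..T, Real.exp (-lam * (T - s)) * (K s) ^ 2)
        = Real.exp (-2 * lam * (T - t)) *
            (∫ s in (0:ℝ)..t, Real.exp (-lam * (t - s)) * (K s) ^ 2)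
          + ∫ s in (0:ℝ)..(T - t), Real.exp (-lam * (T - s)) * (K s) ^ 2) :
    ∃ c : ℝ, ∀ t > 0, K t = c * Real.exp (-lam * t) := by
  set ψ : ℝ → ℝ := fun t => Real.exp (lam * t) * K t
  have hexp_cont : Continuous fun s => Real.exp (lam * s) := by fun_prop
  have hderiv : ∀ t > 0, HasDerivAt (fun x => ∫ s in (0:ℝ)..x, Real.exp (lam * s) * K s ^ 2)
      (Real.exp (lam * t) * K t ^ 2) t :=
    fun t => hasDerivAt_integral_of_continuousOn_Ioi (hexp_cont.continuousOn.mul (hKc.pow 2))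
      fun T hT => ((intervalIntegrable_iff_integrableOn_Ioc_of_le hT.le).2 (hKL2 T hT)
        |>.continuousOn_mul hexp_cont.continuousOn)
  have hshift : ∀ u t, 0 < u → 0 < t → ψ (u + t) ^ 2 = ψ t ^ 2 := by
    intro u t hu ht
    have h := deriv_eq_of_map_add_sub hderiv (fun u t => integral_exp_mul_add_sub hfun) hu ht
    have hexp : Real.exp (lam * (u + t)) * Real.exp (-lam * u) = Real.exp (lam * t) := by
      rw [← Real.exp_add]; ring_nf
    simp only [ψ, mul_pow]
    linear_combination Real.exp (lam * (u + t)) * h + Real.exp (lam * t) * K t ^ 2 * hexp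
  have hsq : ∀ t ∈ Ioi (0:ℝ), ψ t ^ 2 = ψ 1 ^ 2 := fun t (ht : 0 < t) => by
    rw [← hshift 1 t one_pos ht, add_comm, hshift t 1 ht one_pos]
  have hconst := isPreconnected_Ioi.eqOn_of_sq_eq_sq (f := ψ)
    (hexp_cont.continuousOn.mul hKc) (mem_Ioi.2 one_pos) hsq
  refine ⟨ψ 1, fun t ht => ?_⟩
  rw [← hconst t ht, mul_comm, ← mul_assoc, ← Real.exp_add]
  simp
end

section
/- Fix H > 0 and define c_H(a,b) := ∫₀^{min(a,b)} (a−u)^{H−1/2} (b−u)^{H−1/2} du for a, b > 0. Then, as τ ↘ 0, c_H(τ², τ³)² / (c_H(τ², τ²) · c_H(τ³, τ³)) ∼ (2H/(H+1/2))² · τ; in particular c_H(τ², τ³)² = o(c_H(τ², τ²) · c_H(τ³, τ³)). -/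
open MeasureTheory Set Filter intervalIntegral Asymptotics

/-- Covariance function of the Riemann–Liouville process
`Y_t = ∫₀ᵗ (t−s)^{H−1/2} dB_s`. -/
noncomputable def cH (H a b : ℝ) : ℝ :=
  ∫ u in (0:ℝ)..(min a b), (a - u) ^ (H - 1/2) * (b - u) ^ (H - 1/2)

/-! For `0 < b < a`, the factor `(a - u) ^ (H - 1/2)` of the integrand of `c_H(a, b)` stays
between `(a - b) ^ (H - 1/2)` and `a ^ (H - 1/2)` on `[0, b]`, so
`c_H(a, b) ∼ a ^ (H - 1/2) b ^ (H + 1/2) / (H + 1/2)` as `b / a → 0`, while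
`c_H(a, a) = a ^ (2H) / (2H)` exactly. Hence
`c_H(a, b)² / (c_H(a, a) c_H(b, b)) ∼ (2H / (H + 1/2))² · b / a`, and `a = τ², b = τ³` gives
`b / a = τ`. -/

lemma integral_sub_rpow {p : ℝ} (hp : -1 < p) (c : ℝ) :
    ∫ u in (0:ℝ)..c, (c - u) ^ p = c ^ (p + 1) / (p + 1) := by
  rw [intervalIntegral.integral_comp_sub_left (fun x => x ^ p) c, sub_self, sub_zero,
    integral_rpow (Or.inl hp), Real.zero_rpow (by linarith), sub_zero]

lemma intervalIntegrable_sub_rpow {p : ℝ} (hp : -1 < p) (c : ℝ) :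
    IntervalIntegrable (fun u => (c - u) ^ p) volume 0 c := by
  simpa using ((intervalIntegrable_rpow' (a := 0) (b := c) hp).comp_sub_left c).symm

lemma rpow_mem_uIcc {x c d : ℝ} (p : ℝ) (hc : 0 < c) (hcx : c ≤ x) (hxd : x ≤ d) :
    x ^ p ∈ uIcc (c ^ p) (d ^ p) := by
  rcases le_total 0 p with hp | hp
  · exact Icc_subset_uIcc ⟨Real.rpow_le_rpow hc.le hcx hp,
      Real.rpow_le_rpow (hc.trans_le hcx).le hxd hp⟩
  · exact Icc_subset_uIcc' ⟨Real.rpow_le_rpow_of_nonpos (hc.trans_le hcx) hxd hp,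
      Real.rpow_le_rpow_of_nonpos hc hcx hp⟩

variable {H : ℝ}

lemma cH_self (hH : 0 < H) {a : ℝ} (ha : 0 ≤ a) : cH H a a = a ^ (2 * H) / (2 * H) := by
  have hsq : EqOn (fun u => (a - u) ^ (H - 1/2) * (a - u) ^ (H - 1/2))
      (fun u => (a - u) ^ (2 * H - 1)) (uIcc 0 a) := by
    intro u hu
    rw [uIcc_of_le ha] at hu
    simp only [← sq, ← Real.rpow_mul_natCast (by linarith [hu.2] : 0 ≤ a - u)]
    ring_nf
  rw [cH, min_self, integral_congr hsq, integral_sub_rpow (by linarith)]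
  ring_nf

lemma cH_self_pos (hH : 0 < H) {a : ℝ} (ha : 0 < a) : 0 < cH H a a := by
  rw [cH_self hH ha.le]
  positivity

noncomputable def cHLeading (H a b : ℝ) : ℝ :=
  a ^ (H - 1/2) * (b ^ (H + 1/2) / (H + 1/2))

lemma cHLeading_pos (hH : 0 < H) {a b : ℝ} (ha : 0 < a) (hb : 0 < b) : 0 < cHLeading H a b := by
  unfold cHLeading
  have : 0 < H + 1/2 := by linarith
  positivity

lemma cH_mem_uIcc (hH : 0 < H) {a b : ℝ} (hb : 0 < b) (hba : b < a) :
    cH H a b ∈ uIcc ((a - b) ^ (H - 1/2) * (b ^ (H + 1/2) / (H + 1/2))) (cHLeading H a b) := by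
  have hq : -1 < H - 1/2 := by linarith
  have hI : ∫ u in (0:ℝ)..b, (b - u) ^ (H - 1/2) = b ^ (H + 1/2) / (H + 1/2) := by
    rw [integral_sub_rpow hq]; ring_nf
  have hg := intervalIntegrable_sub_rpow hq b
  have hf : IntervalIntegrable (fun u => (a - u) ^ (H - 1/2) * (b - u) ^ (H - 1/2))
      volume 0 b := by
    refine hg.continuousOn_mul (ContinuousOn.rpow_const (by fun_prop) fun u hu => ?_)
    rw [uIcc_of_le hb.le] at hu
    exact Or.inl (by linarith [hu.2])
  set m := min ((a - b) ^ (H - 1/2)) (a ^ (H - 1/2))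
  set M := max ((a - b) ^ (H - 1/2)) (a ^ (H - 1/2))
  have hpt : ∀ u ∈ Icc 0 b, (a - u) ^ (H - 1/2) ∈ Icc m M := fun u hu =>
    rpow_mem_uIcc _ (by linarith) (by linarith [hu.2]) (by linarith [hu.1])
  have hg0 : ∀ u ∈ Icc 0 b, 0 ≤ (b - u) ^ (H - 1/2) := fun u hu =>
    Real.rpow_nonneg (by linarith [hu.2]) _
  have hI0 : 0 ≤ b ^ (H + 1/2) / (H + 1/2) := by positivity
  rw [cHLeading, uIcc, ← min_mul_of_nonneg _ _ hI0, ← max_mul_of_nonneg _ _ hI0, cH,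
    min_eq_right hba.le, ← hI, ← intervalIntegral.integral_const_mul,
    ← intervalIntegral.integral_const_mul]
  exact ⟨integral_mono_on hb.le (hg.const_mul m) hf fun u hu =>
      mul_le_mul_of_nonneg_right (hpt u hu).1 (hg0 u hu),
    integral_mono_on hb.le hf (hg.const_mul M) fun u hu =>
      mul_le_mul_of_nonneg_right (hpt u hu).2 (hg0 u hu)⟩

lemma cH_div_cHLeading_mem_uIcc (hH : 0 < H) {a b : ℝ} (hb : 0 < b) (hba : b < a) :
    cH H a b / cHLeading H a b ∈ uIcc ((1 - b / a) ^ (H - 1/2)) 1 := by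
  have ha : 0 < a := hb.trans hba
  have hsplit : (a - b) ^ (H - 1/2) * (b ^ (H + 1/2) / (H + 1/2)) =
      (1 - b / a) ^ (H - 1/2) * cHLeading H a b := by
    rw [cHLeading, ← mul_assoc, ← Real.mul_rpow (by rw [sub_nonneg, div_le_one ha]; exact hba.le)
      ha.le, sub_mul, one_mul, div_mul_cancel₀ _ ha.ne']
  have h : cH H a b ∈ uIcc ((1 - b / a) ^ (H - 1/2) * cHLeading H a b) (1 * cHLeading H a b) := by
    rw [← hsplit, one_mul]
    exact cH_mem_uIcc hH hb hba
  rwa [← preimage_div_const_uIcc (cHLeading_pos hH ha hb).ne'] at h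

lemma cH_sq_div_cH_mul_cH (hH : 0 < H) {a b : ℝ} (ha : 0 < a) (hb : 0 < b) :
    cH H a b ^ 2 / (cH H a a * cH H b b) =
      (2 * H / (H + 1/2)) ^ 2 * (b / a) * (cH H a b / cHLeading H a b) ^ 2 := by
  have ha2 : (a ^ (H - 1/2)) ^ 2 = a ^ (2 * H) / a := by
    rw [← Real.rpow_mul_natCast ha.le, ← Real.rpow_sub_one ha.ne']; ring_nf
  have hb2 : (b ^ (H + 1/2)) ^ 2 = b ^ (2 * H) * b := by
    rw [← Real.rpow_mul_natCast hb.le, ← Real.rpow_add_one hb.ne']; ring_nf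
  have : 0 < H + 1/2 := by linarith
  rw [cH_self hH ha.le, cH_self hH hb.le, cHLeading, div_pow (cH H a b), mul_pow, div_pow (b ^ _),
    ha2, hb2]
  field_simp

section Asymptotics

variable {α : Type*} {l : Filter α} {a b : α → ℝ}

lemma tendsto_cH_div_cHLeading (hH : 0 < H) (hab : ∀ᶠ x in l, 0 < b x ∧ b x < a x)
    (hba : Tendsto (fun x => b x / a x) l (nhds 0)) :
    Tendsto (fun x => cH H (a x) (b x) / cHLeading H (a x) (b x)) l (nhds 1) := by
  have hlow : Tendsto (fun x => (1 - b x / a x) ^ (H - 1/2)) l (nhds 1) := by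
    simpa using (tendsto_const_nhds (x := (1:ℝ)).sub hba).rpow_const (Or.inl (by norm_num))
  have hmem : ∀ᶠ x in l, cH H (a x) (b x) / cHLeading H (a x) (b x) ∈
      uIcc ((1 - b x / a x) ^ (H - 1/2)) 1 :=
    hab.mono fun x hx => cH_div_cHLeading_mem_uIcc hH hx.1 hx.2
  exact tendsto_of_tendsto_of_tendsto_of_le_of_le'
    (by simpa using hlow.min (tendsto_const_nhds (x := (1:ℝ))))
    (by simpa using hlow.max (tendsto_const_nhds (x := (1:ℝ))))
    (hmem.mono fun _ hx => hx.1) (hmem.mono fun _ hx => hx.2)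

theorem tendsto_cH_sq_div_cH_mul_cH (hH : 0 < H) (hab : ∀ᶠ x in l, 0 < b x ∧ b x < a x)
    (hba : Tendsto (fun x => b x / a x) l (nhds 0)) :
    Tendsto (fun x => cH H (a x) (b x) ^ 2 / (cH H (a x) (a x) * cH H (b x) (b x)) /
      ((2 * H / (H + 1/2)) ^ 2 * (b x / a x))) l (nhds 1) := by
  have hk : (2 * H / (H + 1/2)) ^ 2 ≠ 0 := by
    have : 0 < H + 1/2 := by linarith
    positivity
  have h := (tendsto_cH_div_cHLeading hH hab hba).pow 2
  rw [one_pow] at h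
  refine h.congr' ?_
  filter_upwards [hab] with x ⟨hb, hlt⟩
  rw [cH_sq_div_cH_mul_cH hH (hb.trans hlt) hb,
    mul_div_cancel_left₀ _ (mul_ne_zero hk (div_pos hb (hb.trans hlt)).ne')]

theorem isLittleO_cH_sq (hH : 0 < H) (hab : ∀ᶠ x in l, 0 < b x ∧ b x < a x)
    (hba : Tendsto (fun x => b x / a x) l (nhds 0)) :
    (fun x => cH H (a x) (b x) ^ 2) =o[l] (fun x => cH H (a x) (a x) * cH H (b x) (b x)) := by
  rw [isLittleO_iff_tendsto']
  · have h := ((tendsto_const_nhds (x := (2 * H / (H + 1/2)) ^ 2)).mul hba).mul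
      ((tendsto_cH_div_cHLeading hH hab hba).pow 2)
    rw [mul_zero, zero_mul] at h
    refine h.congr' ?_
    filter_upwards [hab] with x ⟨hb, hlt⟩
    rw [cH_sq_div_cH_mul_cH hH (hb.trans hlt) hb]
  · filter_upwards [hab] with x ⟨hb, hlt⟩ h0
    exact absurd h0 (mul_pos (cH_self_pos hH (hb.trans hlt)) (cH_self_pos hH hb)).ne'

end Asymptotics

/-- As `τ ↘ 0`, `c_H(τ²,τ³)²/(c_H(τ²,τ²) c_H(τ³,τ³)) ∼ (2H/(H+1/2))² τ`;
in particular `c_H(τ²,τ³)² = o(c_H(τ²,τ²) c_H(τ³,τ³))`. -/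
theorem stmt_11 (H : ℝ) (hH : 0 < H) :
    Filter.Tendsto (fun τ : ℝ =>
        ((cH H (τ ^ 2) (τ ^ 3)) ^ 2 /
          (cH H (τ ^ 2) (τ ^ 2) * cH H (τ ^ 3) (τ ^ 3))) /
          ((2 * H / (H + 1/2)) ^ 2 * τ))
      (nhdsWithin 0 (Set.Ioi 0)) (nhds 1) ∧
    (fun τ : ℝ => (cH H (τ ^ 2) (τ ^ 3)) ^ 2)
      =o[nhdsWithin 0 (Set.Ioi 0)]
        (fun τ : ℝ => cH H (τ ^ 2) (τ ^ 2) * cH H (τ ^ 3) (τ ^ 3)) := by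
  have hτ : ∀ᶠ τ in nhdsWithin (0:ℝ) (Ioi 0), τ ∈ Ioo 0 1 := Ioo_mem_nhdsGT one_pos
  have hratio : ∀ᶠ τ in nhdsWithin (0:ℝ) (Ioi 0), τ ^ 3 / τ ^ 2 = τ :=
    hτ.mono fun τ hτ => by field_simp [hτ.1.ne']
  have hab : ∀ᶠ τ in nhdsWithin (0:ℝ) (Ioi 0), 0 < τ ^ 3 ∧ τ ^ 3 < τ ^ 2 :=
    hτ.mono fun τ ⟨h0, h1⟩ => ⟨by positivity, pow_lt_pow_right_of_lt_one₀ h0 h1 (by norm_num)⟩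
  have hba : Tendsto (fun τ : ℝ => τ ^ 3 / τ ^ 2) (nhdsWithin 0 (Ioi 0)) (nhds 0) :=
    (tendsto_nhdsWithin_of_tendsto_nhds tendsto_id).congr' (hratio.mono fun _ h => h.symm)
  refine ⟨(tendsto_cH_sq_div_cH_mul_cH hH hab hba).congr' ?_, isLittleO_cH_sq hH hab hba⟩
  filter_upwards [hratio] with τ h
  rw [h]
end
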